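/- arXiv:2604.08900 — 5 statements merged into one kernel-verified Lean document; each statement's English description precedes it below -/
import Mathlib

section
/- The element M^{11} = T^{11} ⊗ I_n, where T^{11} is the 4×4 matrix with entries +1 at (1,4), -1 at (2,3), -1 at (3,2), +1 at (4,1), graded-commutes with all basis elements of ℤ₂²-q(n): ⟦M^{11}, E_{ij}^β⟧ = M^{11}E_{ij}^β - ω(11,β)E_{ij}^β M^{11} = 0 for all β ∈ ℤ₂² and all i,j. -/
noncomputable def Θ (α : ZMod 2 × ZMod 2) : Matrix (Fin 4) (Fin 4) ℂ :=
  if α = (0, 0) then 1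
  else if α = (1, 0) then !![0,0,1,0; 0,0,0,1; 1,0,0,0; 0,1,0,0]
  else if α = (0, 1) then !![0,1,0,0; 1,0,0,0; 0,0,0,1; 0,0,1,0]
  else !![0,0,0,1; 0,0,1,0; 0,1,0,0; 1,0,0,0]

noncomputable def T11 : Matrix (Fin 4) (Fin 4) ℂ :=
  !![0,0,0,1; 0,0,-1,0; 0,-1,0,0; 1,0,0,0]

def ω22 (α β : ZMod 2 × ZMod 2) : ℂ := (-1 : ℂ) ^ ((α.1 * β.1 + α.2 * β.2 : ZMod 2)).val

noncomputable def Eqn (n : ℕ) (α : ZMod 2 × ZMod 2) (i j : Fin n) :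
    Matrix (Fin 4 × Fin n) (Fin 4 × Fin n) ℂ :=
  Matrix.kroneckerMap (· * ·) (Θ α) (Matrix.single i j (1 : ℂ))

/-- M^{11} = T^{11} ⊗ I_n. -/
noncomputable def M11 (n : ℕ) : Matrix (Fin 4 × Fin n) (Fin 4 × Fin n) ℂ :=
  Matrix.kroneckerMap (· * ·) T11 (1 : Matrix (Fin n) (Fin n) ℂ)

/-!
The Kronecker product is multiplicative factorwise, so the graded commutator of `T11 ⊗ 1` with
`Θ β ⊗ e_{ij}` is `(T11 * Θ β - ω • Θ β * T11) ⊗ e_{ij}`. The first factor vanishes by a direct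
`4 × 4` computation: `T11` anticommutes with `Θ (1, 0)` and `Θ (0, 1)` and commutes with `Θ (1, 1)`.
-/

open scoped Kronecker

theorem Matrix.kronecker_one_mul_sub_smul_eq_zero {R l n : Type*} [CommRing R] [Fintype l]
    [DecidableEq l] [Fintype n] [DecidableEq n] {A B : Matrix l l R} {c : R}
    (h : A * B = c • (B * A)) (C : Matrix n n R) :
    (A ⊗ₖ 1) * (B ⊗ₖ C) - c • ((B ⊗ₖ C) * (A ⊗ₖ 1)) = 0 := by
  rw [← mul_kronecker_mul, ← mul_kronecker_mul, one_mul, mul_one, h, smul_kronecker, sub_self]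

theorem T11_mul_Θ (β : ZMod 2 × ZMod 2) : T11 * Θ β = ω22 (1, 1) β • (Θ β * T11) := by
  have hβ : β = (0, 0) ∨ β = (1, 0) ∨ β = (0, 1) ∨ β = (1, 1) := by
    revert β; decide
  have h_two : (1 + 1 : ZMod 2) = 0 := rfl
  rcases hβ with rfl | rfl | rfl | rfl <;>
    simp [Θ, ω22, Prod.ext_iff, h_two, ZMod.val_one] <;>
    · ext p q
      fin_cases p <;> fin_cases q <;> simp [T11, Matrix.mul_apply, Fin.sum_univ_four]

theorem stmt12 (n : ℕ) (β : ZMod 2 × ZMod 2) (i j : Fin n) :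
    M11 n * Eqn n β i j - ω22 (1, 1) β • (Eqn n β i j * M11 n) = 0 :=
  Matrix.kronecker_one_mul_sub_smul_eq_zero (T11_mul_Θ β) _
end

section
/- Let g be a color Lie algebra over (Γ,ω) with homogeneous basis {X_{α_i}} and structure constants f, and suppose η^μ is a Γ-graded invariant bilinear form of degree μ: η^μ(X_{α_i},X_{β_j}) = 0 unless α+β = μ, η^μ(X_{β_j},X_{α_i}) = ω(μ,μ)ω(α,β)η^μ(X_{α_i},X_{β_j}), and η^μ(⟦X,Y⟧,Z) = ω(μ,β)η^μ(X,⟦Y,Z⟧) for homogeneous X,Y (deg β),Z. If η^μ is nondegenerate with inverse η_μ, then C_μ = Σ_{α_i,β_j} η_μ^{α_i β_j} X_{α_i} X_{β_j} lies in the graded center of the universal enveloping algebra: ⟦X, C_μ⟧ = X C_μ - ω(deg X, μ) C_μ X = 0 for all homogeneous X ∈ g. -/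
theorem stmt15 {Γ : Type*} [AddCommGroup Γ] {A : Type*} [Ring A] [Algebra ℂ A]
    {I : Type*} [Fintype I] [DecidableEq I]
    (deg : I → Γ) (ω : Γ → Γ → ℂ) (μ : Γ)
    (f : I → I → I → ℂ) (ηu ηl : I → I → ℂ) (x : I → A)
    (hω1 : ∀ a b, ω a b * ω b a = 1)
    (hω2 : ∀ a b c, ω a (b + c) = ω a b * ω a c)
    (hω3 : ∀ a b c, ω (a + b) c = ω a c * ω b c)
    (hf0 : ∀ i j k, deg i + deg j ≠ deg k → f i j k = 0)
    (hfskew : ∀ i j k, f i j k = -(ω (deg i) (deg j)) * f j i k)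
    (hηu0 : ∀ i j, deg i + deg j ≠ μ → ηu i j = 0)
    (hηusym : ∀ i j, ηu j i = ω μ μ * ω (deg i) (deg j) * ηu i j)
    (hinv : ∀ i j k, ∑ l, f i j l * ηu l k = ω μ (deg j) * ∑ l, f j k l * ηu i l)
    (hηl0 : ∀ i j, deg i + deg j ≠ μ → ηl i j = 0)
    (hη1 : ∀ i j, ∑ k, ηl i k * ηu k j = if i = j then 1 else 0)
    (hη2 : ∀ i j, ∑ k, ηu i k * ηl k j = if i = j then 1 else 0)
    (hrel : ∀ i j, x i * x j - ω (deg i) (deg j) • (x j * x i) = ∑ k, f i j k • x k) :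
    ∀ i, x i * (∑ p, ∑ q, ηl p q • (x p * x q)) -
      ω (deg i) μ • ((∑ p, ∑ q, ηl p q • (x p * x q)) * x i) = 0 := by
  intro i
  -- Step (A): contract invariance with ηl on the left
  have hA : ∀ v w a, (∑ u, ηl a u * (∑ l, f u v l * ηu l w))
      = ω μ (deg v) * (f v w a) := by
    intro v w a
    calc (∑ u, ηl a u * (∑ l, f u v l * ηu l w))
        = ∑ u, ηl a u * (ω μ (deg v) * ∑ l, f v w l * ηu u l) := by
          refine Finset.sum_congr rfl fun u _ => by rw [hinv]
      _ = ω μ (deg v) * ∑ l, f v w l * (∑ u, ηl a u * ηu u l) := by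
          simp only [Finset.mul_sum]
          rw [Finset.sum_comm]
          refine Finset.sum_congr rfl fun l _ => Finset.sum_congr rfl fun u _ => by ring
      _ = ω μ (deg v) * ∑ l, f v w l * (if a = l then 1 else 0) := by
          refine congrArg _ (Finset.sum_congr rfl fun l _ => by rw [hη1])
      _ = ω μ (deg v) * (f v w a) := by
          congr 1
          simp [mul_ite, eq_comm]
  -- Step (B): contract with ηl on the right
  have hB : ∀ v a b, (∑ u, ηl a u * f u v b)
      = ω μ (deg v) * ∑ w, f v w a * ηl w b := by
    intro v a b
    calc (∑ u, ηl a u * f u v b)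
        = ∑ u, ηl a u * (∑ l, f u v l * (if l = b then 1 else 0)) := by
          refine Finset.sum_congr rfl fun u _ => by simp
      _ = ∑ u, ηl a u * (∑ l, f u v l * (∑ w, ηu l w * ηl w b)) := by
          refine Finset.sum_congr rfl fun u _ => by
            refine congrArg _ (Finset.sum_congr rfl fun l _ => by rw [hη2])
      _ = ∑ w, (∑ u, ηl a u * (∑ l, f u v l * ηu l w)) * ηl w b := by
          simp only [Finset.mul_sum, Finset.sum_mul]
          conv_rhs => rw [Finset.sum_comm]
          refine Finset.sum_congr rfl fun u _ => ?_
          conv_rhs => rw [Finset.sum_comm]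
          exact Finset.sum_congr rfl fun l _ => Finset.sum_congr rfl fun w _ => by ring
      _ = ∑ w, (ω μ (deg v) * f v w a) * ηl w b := by
          refine Finset.sum_congr rfl fun w _ => by rw [hA]
      _ = ω μ (deg v) * ∑ w, f v w a * ηl w b := by
          rw [Finset.mul_sum]
          exact Finset.sum_congr rfl fun w _ => by ring
  -- Key coefficient identity
  have hK : ∀ a b, ω (deg i) (deg a) * (∑ q, ηl a q * f i q b)
      + (∑ p, f i p a * ηl p b) = 0 := by
    intro a b
    have hE : (∑ u, ηl a u * f u i b)
        = -(ω μ (deg i) * (ω (deg i) (deg a) * (∑ u, ηl a u * f i u b))) := by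
      rw [Finset.mul_sum, Finset.mul_sum, ← Finset.sum_neg_distrib]
      refine Finset.sum_congr rfl fun u _ => ?_
      by_cases h : ηl a u = 0
      · simp [h]
      · have hd : deg a + deg u = μ := by
          by_contra hc; exact h (hηl0 a u hc)
        have h3 : ω (deg a) (deg i) * ω (deg u) (deg i) = ω μ (deg i) := by
          rw [← hω3, hd]
        have hskew := hfskew u i b
        have h1 := hω1 (deg i) (deg a)
        calc ηl a u * f u i b = ηl a u * (-(ω (deg u) (deg i)) * f i u b) := by rw [hskew]
          _ = -(ω μ (deg i) * (ω (deg i) (deg a) * (ηl a u * f i u b))) := by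
            have : ω (deg u) (deg i) = ω (deg i) (deg a) * ω μ (deg i) := by
              have := congrArg (fun t => ω (deg i) (deg a) * t) h3
              calc ω (deg u) (deg i) = 1 * ω (deg u) (deg i) := by ring
                _ = (ω (deg i) (deg a) * ω (deg a) (deg i)) * ω (deg u) (deg i) := by
                    rw [h1]
                _ = ω (deg i) (deg a) * (ω (deg a) (deg i) * ω (deg u) (deg i)) := by ring
                _ = ω (deg i) (deg a) * ω μ (deg i) := by rw [h3]
            rw [this]; ring
    have hBv := hB i a b
    have h2 := hω1 (deg i) μ
    -- from hE and hBv:  -(ωμα * d * S) = ωμα * T  where T = ∑ f i p a * ηl p b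
    have hET : -(ω μ (deg i) * (ω (deg i) (deg a) * (∑ u, ηl a u * f i u b)))
        = ω μ (deg i) * ∑ w, f i w a * ηl w b := by rw [← hE, hBv]
    linear_combination (-(ω (deg i) μ)) * hET -
      (ω (deg i) (deg a) * (∑ q, ηl a q * f i q b) + ∑ p, f i p a * ηl p b) * h2
  -- commutation relation, rearranged
  have hrel' : ∀ j k, x j * x k = ω (deg j) (deg k) • (x k * x j) + ∑ l, f j k l • x l :=
    fun j k => sub_eq_iff_eq_add'.mp (hrel j k)
  -- expansion of x i * (x p * x q)
  have expand : ∀ p q, x i * (x p * x q) =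
      (ω (deg i) (deg p) * ω (deg i) (deg q)) • (x p * x q * x i)
      + (∑ k, (ω (deg i) (deg p) * f i q k) • (x p * x k))
      + (∑ k, f i p k • (x k * x q)) := by
    intro p q
    calc x i * (x p * x q) = (x i * x p) * x q := (mul_assoc _ _ _).symm
      _ = (ω (deg i) (deg p) • (x p * x i) + ∑ l, f i p l • x l) * x q := by rw [hrel']
      _ = ω (deg i) (deg p) • (x p * (x i * x q)) + ∑ l, f i p l • (x l * x q) := by
          simp [add_mul, Finset.sum_mul, smul_mul_assoc, mul_assoc]
      _ = ω (deg i) (deg p) •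
            (x p * (ω (deg i) (deg q) • (x q * x i) + ∑ l, f i q l • x l))
          + ∑ l, f i p l • (x l * x q) := by rw [hrel']
      _ = _ := by
          simp only [mul_add, Finset.mul_sum, mul_smul_comm, smul_add, smul_smul,
            Finset.smul_sum, mul_assoc]
  -- per-term identity including the support condition for ηl
  have key : ∀ p q, ηl p q • (x i * (x p * x q)) - (ω (deg i) μ * ηl p q) • (x p * x q * x i)
      = (∑ k, (ηl p q * (ω (deg i) (deg p) * f i q k)) • (x p * x k))
      + (∑ k, (ηl p q * f i p k) • (x k * x q)) := by
    intro p q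
    by_cases h : ηl p q = 0
    · simp [h]
    · have hd : deg p + deg q = μ := by
        by_contra hc; exact h (hηl0 p q hc)
      have hc : ηl p q * (ω (deg i) (deg p) * ω (deg i) (deg q)) = ω (deg i) μ * ηl p q := by
        rw [← hd, hω2]; ring
      rw [expand p q]
      simp only [smul_add, Finset.smul_sum, smul_smul, hc]
      abel
  -- now assemble
  have lhs_eq : x i * (∑ p, ∑ q, ηl p q • (x p * x q)) -
      ω (deg i) μ • ((∑ p, ∑ q, ηl p q • (x p * x q)) * x i)
      = ∑ p, ∑ q, (ηl p q • (x i * (x p * x q))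
          - (ω (deg i) μ * ηl p q) • (x p * x q * x i)) := by
    simp only [Finset.mul_sum, Finset.sum_mul, mul_smul_comm, smul_mul_assoc,
      Finset.smul_sum, smul_smul, ← Finset.sum_sub_distrib]
  rw [lhs_eq]
  have split : (∑ p, ∑ q, (ηl p q • (x i * (x p * x q))
          - (ω (deg i) μ * ηl p q) • (x p * x q * x i)))
      = (∑ p, ∑ q, ∑ k, (ηl p q * (ω (deg i) (deg p) * f i q k)) • (x p * x k))
      + (∑ p, ∑ q, ∑ k, (ηl p q * f i p k) • (x k * x q)) := by
    rw [← Finset.sum_add_distrib]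
    refine Finset.sum_congr rfl fun p _ => ?_
    rw [← Finset.sum_add_distrib]
    exact Finset.sum_congr rfl fun q _ => key p q
  rw [split]
  -- reorganize first triple sum
  have S1 : (∑ p, ∑ q, ∑ k, (ηl p q * (ω (deg i) (deg p) * f i q k)) • (x p * x k))
      = ∑ a, ∑ b, (ω (deg i) (deg a) * (∑ q, ηl a q * f i q b)) • (x a * x b) := by
    refine Finset.sum_congr rfl fun a _ => ?_
    rw [Finset.sum_comm]
    refine Finset.sum_congr rfl fun b _ => ?_
    rw [Finset.mul_sum, Finset.sum_smul]
    exact Finset.sum_congr rfl fun q _ => by congr 1; ring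
  -- reorganize second triple sum
  have S2 : (∑ p, ∑ q, ∑ k, (ηl p q * f i p k) • (x k * x q))
      = ∑ a, ∑ b, (∑ p, f i p a * ηl p b) • (x a * x b) := by
    rw [Finset.sum_comm]
    have hq : ∀ q, (∑ p, ∑ k, (ηl p q * f i p k) • (x k * x q))
        = ∑ k, (∑ p, f i p k * ηl p q) • (x k * x q) := by
      intro q
      rw [Finset.sum_comm]
      refine Finset.sum_congr rfl fun k _ => ?_
      rw [Finset.sum_smul]
      exact Finset.sum_congr rfl fun p _ => by congr 1; ring
    rw [Finset.sum_congr rfl fun q _ => hq q]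
    rw [Finset.sum_comm]
  rw [S1, S2, ← Finset.sum_add_distrib]
  refine Finset.sum_eq_zero fun a _ => ?_
  rw [← Finset.sum_add_distrib]
  refine Finset.sum_eq_zero fun b _ => ?_
  rw [← add_smul, hK, zero_smul]
end

section
/- Let g be a finite-dimensional color Lie algebra over (Γ,ω), (ρ,V) a finite-dimensional graded representation, and M^{-μ} a commutant of degree -μ (i.e., ⟦M^{-μ}, ρ(X)⟧ = 0 for all homogeneous X). Define η^μ(X,Y) = ctr(ρ(X) M^{-μ} ρ(Y)). Then η^μ is invariant: η^μ(⟦X,Y⟧, Z) = ω(μ, deg Y)·η^μ(X, ⟦Y,Z⟧) for all homogeneous X, Y, Z ∈ g. -/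
theorem stmt16 {Γ A : Type*} [AddCommGroup Γ] [Ring A] [Algebra ℂ A]
    (ω : Γ → Γ → ℂ)
    (hω1 : ∀ a b, ω a b * ω b a = 1)
    (hω2 : ∀ a b c, ω a (b + c) = ω a b * ω a c)
    (hω3 : ∀ a b c, ω (a + b) c = ω a c * ω b c)
    (𝒜 : Γ → Submodule ℂ A)
    (hmul : ∀ a b (x y : A), x ∈ 𝒜 a → y ∈ 𝒜 b → x * y ∈ 𝒜 (a + b))
    (ctr : A →ₗ[ℂ] ℂ)
    (hcyc : ∀ a b (x y : A), x ∈ 𝒜 a → y ∈ 𝒜 b → ctr (x * y) = ω a b * ctr (y * x))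
    -- g' is the image ρ(g) of the color Lie algebra in End(V) = A
    (g' : Set A) (μ : Γ) (M : A) (hM : M ∈ 𝒜 (-μ))
    (hcomm : ∀ δ (x : A), x ∈ g' → x ∈ 𝒜 δ → M * x - ω (-μ) δ • (x * M) = 0)
    (α β γ : Γ) (X Y Z : A)
    (hX : X ∈ g' ∧ X ∈ 𝒜 α) (hY : Y ∈ g' ∧ Y ∈ 𝒜 β) (hZ : Z ∈ g' ∧ Z ∈ 𝒜 γ) :
    ctr ((X * Y - ω α β • (Y * X)) * M * Z) =
      ω μ β * ctr (X * M * (Y * Z - ω β γ • (Z * Y))) := by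
  obtain ⟨hXg, hXα⟩ := hX
  obtain ⟨hYg, hYβ⟩ := hY
  obtain ⟨hZg, hZγ⟩ := hZ
  -- basic facts about ω
  have h0l : ∀ b, ω 0 b = 1 := by
    intro b
    have hne : ω 0 b ≠ 0 := left_ne_zero_of_mul_eq_one (hω1 0 b)
    have h := hω3 0 0 b
    simp only [add_zero] at h
    have : ω 0 b * ω 0 b = ω 0 b * 1 := by rw [mul_one]; exact h.symm
    exact mul_left_cancel₀ hne this
  have h0r : ∀ b, ω b 0 = 1 := by
    intro b
    have hne : ω b 0 ≠ 0 := left_ne_zero_of_mul_eq_one (hω1 b 0)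
    have h := hω2 b 0 0
    simp only [add_zero] at h
    have : ω b 0 * ω b 0 = ω b 0 * 1 := by rw [mul_one]; exact h.symm
    exact mul_left_cancel₀ hne this
  have hinv : ω μ β * ω (-μ) β = 1 := by
    have h := hω3 μ (-μ) β
    rw [add_neg_cancel, h0l] at h
    exact h.symm
  have hβμ : ω β (-μ) = ω μ β := by
    have h := hω2 β μ (-μ)
    rw [add_neg_cancel, h0r] at h
    have hne : ω β μ ≠ 0 := left_ne_zero_of_mul_eq_one (hω1 β μ)
    have h2 := hω1 β μ
    exact mul_left_cancel₀ hne (by rw [← h, h2])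
  -- M-commutation with Y
  have hc : M * Y = ω (-μ) β • (Y * M) := sub_eq_zero.mp (hcomm β Y hYg hYβ)
  have e1 : Y * M = ω μ β • (M * Y) := by
    rw [hc, smul_smul, hinv, one_smul]
  -- first term
  have L1 : ctr (X * Y * M * Z) = ω μ β * ctr (X * M * (Y * Z)) := by
    have : X * Y * M * Z = ω μ β • (X * M * (Y * Z)) := by
      rw [mul_assoc X Y M, e1]
      simp only [mul_smul_comm, smul_mul_assoc, mul_assoc]
    rw [this, map_smul, smul_eq_mul]
  -- second term, via cyclicity
  have hmem : X * M * Z ∈ 𝒜 (α + -μ + γ) :=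
    hmul _ _ _ _ (hmul _ _ _ _ hXα hM) hZγ
  have L2 : ctr (Y * X * M * Z) = ω β α * ω μ β * ω β γ * ctr (X * M * (Z * Y)) := by
    have h := hcyc β (α + -μ + γ) Y (X * M * Z) hYβ hmem
    rw [← mul_assoc, ← mul_assoc] at h
    rw [h, hω2, hω2, hβμ]
    have : X * M * Z * Y = X * M * (Z * Y) := by rw [mul_assoc]
    rw [this]
  -- put it together
  rw [sub_mul, sub_mul, smul_mul_assoc, smul_mul_assoc, map_sub, map_smul, smul_eq_mul,
    L1, L2, mul_sub, mul_smul_comm, map_sub, map_smul, smul_eq_mul]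
  linear_combination (-(ω μ β * ω β γ * ctr (X * M * (Z * Y)))) * hω1 α β
end

section
/- Let g be a finite-dimensional color Lie algebra over (Γ,ω), M^{-μ} a commutant of degree -μ in a graded representation ρ, and η^μ(X,Y) = ctr(ρ(X)M^{-μ}ρ(Y)). Then η^μ(X_{α}, X_{β}) = 0 whenever α + β ≠ μ, and η^μ(X_β, X_α) = ω(μ,μ)·ω(α,β)·η^μ(X_α, X_β) for homogeneous X_α, X_β of degrees α, β. -/
theorem stmt17 {Γ A : Type*} [AddCommGroup Γ] [Ring A] [Algebra ℂ A]
    (ω : Γ → Γ → ℂ)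
    (hω1 : ∀ a b, ω a b * ω b a = 1)
    (hω2 : ∀ a b c, ω a (b + c) = ω a b * ω a c)
    (hω3 : ∀ a b c, ω (a + b) c = ω a c * ω b c)
    (𝒜 : Γ → Submodule ℂ A)
    (hmul : ∀ a b (x y : A), x ∈ 𝒜 a → y ∈ 𝒜 b → x * y ∈ 𝒜 (a + b))
    (ctr : A →ₗ[ℂ] ℂ)
    (hcyc : ∀ a b (x y : A), x ∈ 𝒜 a → y ∈ 𝒜 b → ctr (x * y) = ω a b * ctr (y * x))
    (hctr0 : ∀ a (x : A), x ∈ 𝒜 a → a ≠ 0 → ctr x = 0)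
    -- g' is the image ρ(g) of the color Lie algebra in End(V) = A
    (g' : Set A) (μ : Γ) (M : A) (hM : M ∈ 𝒜 (-μ))
    (hcomm : ∀ δ (x : A), x ∈ g' → x ∈ 𝒜 δ → M * x - ω (-μ) δ • (x * M) = 0)
    (α β : Γ) (X Y : A)
    (hX : X ∈ g' ∧ X ∈ 𝒜 α) (hY : Y ∈ g' ∧ Y ∈ 𝒜 β) :
    (α + β ≠ μ → ctr (X * M * Y) = 0) ∧
      ctr (Y * M * X) = ω μ μ * ω α β * ctr (X * M * Y) := by
  obtain ⟨hXg, hXα⟩ := hX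
  obtain ⟨hYg, hYβ⟩ := hY
  have hne : ∀ a b, ω a b ≠ 0 := by
    intro a b h
    have h1 := hω1 a b
    rw [h, zero_mul] at h1
    exact zero_ne_one h1
  have h0r : ∀ a, ω 0 a = 1 := by
    intro a
    have h := hω3 0 0 a
    rw [add_zero] at h
    exact (mul_left_cancel₀ (hne 0 a) (by rw [mul_one]; exact h)).symm
  have h0l : ∀ a, ω a 0 = 1 := by
    intro a
    have h := hω2 a 0 0
    rw [add_zero] at h
    exact (mul_left_cancel₀ (hne a 0) (by rw [mul_one]; exact h)).symm
  have canc : ∀ x y z : ℂ, x * y = 1 → z * y = 1 → x = z := by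
    intro x y z h1 h2
    calc x = x * (z * y) := by rw [h2, mul_one]
    _ = z * (x * y) := by ring
    _ = z := by rw [h1, mul_one]
  have e1 : ω β (-β) = ω β β :=
    canc _ _ _ (by rw [← hω2, neg_add_cancel, h0l]) (hω1 β β)
  have e2 : ω (-α) α = ω α α :=
    canc _ _ _ (by rw [← hω3, neg_add_cancel, h0r]) (hω1 α α)
  have e3 : ω (-β) α = ω α β :=
    canc _ _ _ (by rw [← hω3, neg_add_cancel, h0r]) (hω1 α β)
  have hmem : X * M * Y ∈ 𝒜 (α + -μ + β) := hmul _ _ _ _ (hmul _ _ _ _ hXα hM) hYβ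
  have part1 : α + β ≠ μ → ctr (X * M * Y) = 0 := by
    intro h
    refine hctr0 _ _ hmem ?_
    intro h0
    apply h
    have h1 : α + β - μ = 0 := by rw [← h0]; abel
    exact sub_eq_zero.mp h1
  refine ⟨part1, ?_⟩
  by_cases hμ : α + β = μ
  · have hMX : M * X = ω (-μ) α • (X * M) := sub_eq_zero.mp (hcomm α X hXg hXα)
    have hMXmem : M * X ∈ 𝒜 (-μ + α) := hmul _ _ _ _ hM hXα
    have step : ctr (Y * M * X) = ω β (-μ + α) * ctr (M * X * Y) := by
      rw [mul_assoc]; exact hcyc β (-μ + α) Y (M * X) hYβ hMXmem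
    have step2 : ctr (M * X * Y) = ω (-μ) α * ctr (X * M * Y) := by
      rw [hMX, smul_mul_assoc, map_smul, smul_eq_mul]
    rw [step, step2]
    have hμ' : -μ + α = -β := by rw [← hμ]; abel
    have hμ'' : ω (-μ) α = ω (-α) α * ω (-β) α := by
      rw [← hω3]; congr 1; rw [← hμ]; abel
    have hexp : ω μ μ = ω α α * ω α β * (ω β α * ω β β) := by
      rw [← hμ, hω3, hω2, hω2]
    rw [hμ', hμ'', hexp, e1, e2, e3]
    linear_combination (-(ω α α * ω β β * ω α β * ctr (X * M * Y))) * hω1 α β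
  · have hz1 := part1 hμ
    have hmem' : Y * M * X ∈ 𝒜 (β + -μ + α) := hmul _ _ _ _ (hmul _ _ _ _ hYβ hM) hXα
    have hz2 : ctr (Y * M * X) = 0 := by
      refine hctr0 _ _ hmem' ?_
      intro h0
      apply hμ
      have h1 : α + β - μ = 0 := by rw [← h0]; abel
      exact sub_eq_zero.mp h1
    rw [hz1, hz2, mul_zero]
end

section
/- Let g be a color Lie algebra over (Γ,ω) with invariant nondegenerate graded bilinear form η^μ of degree μ. Define the extended loop bracket on L(g) ⊕ ⊕_μ ℂc_μ by ⟦X_{α_i}^{(m)}, X_{β_j}^{(n)}⟧ = Σ_{γ_k} f_{α_i β_j}^{γ_k} X_{γ_k}^{(m+n)} + Σ_μ m·δ_{m+n,0}·ω(α,μ)·η^μ_{α_i β_j}·c_μ, with c_μ central. Then this bracket satisfies the color Jacobi identity ⟦X,⟦Y,Z⟧⟧ = ⟦⟦X,Y⟧,Z⟧ + ω(deg X, deg Y)⟦Y,⟦X,Z⟧⟧. -/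
section
variable {Γ : Type*} [AddCommGroup Γ] {I : Type*} [Fintype I]

/-- The extended loop algebra: spanned by the basis elements X_{α_i}^{(m)}
(first component) together with the central elements c_μ, μ ∈ Γ (second component). -/
abbrev ExtLoop (Γ I : Type*) : Type _ := ((I × ℤ) →₀ ℂ) × (Γ → ℂ)

/-- The bracket of two basis elements X_i^{(m)}, X_j^{(n)}:
structure-constant part plus the central term Σ_μ m δ_{m+n,0} ω(deg i, μ) η^μ_{ij} c_μ. -/
noncomputable def br0 (deg : I → Γ) (ω : Γ → Γ → ℂ) (f : I → I → I → ℂ)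
    (η : Γ → I → I → ℂ) (i : I) (m : ℤ) (j : I) (n : ℤ) : ExtLoop Γ I :=
  (∑ k, f i j k • Finsupp.single (k, m + n) (1 : ℂ),
   fun μ => (m : ℂ) * (if m + n = 0 then 1 else 0) * ω (deg i) μ * η μ i j)

/-- The bilinear extension of the bracket; the central elements c_μ bracket to zero. -/
noncomputable def brkt (deg : I → Γ) (ω : Γ → Γ → ℂ) (f : I → I → I → ℂ)
    (η : Γ → I → I → ℂ) (x y : ExtLoop Γ I) : ExtLoop Γ I :=
  x.1.sum fun p a => y.1.sum fun q b => (a * b) • br0 deg ω f η p.1 p.2 q.1 q.2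

/-- The basis element X_i^{(m)}. -/
noncomputable def e (i : I) (m : ℤ) : ExtLoop Γ I := (Finsupp.single (i, m) 1, 0)


set_option linter.unusedSectionVars false in
lemma brkt_e_left (deg : I → Γ) (ω : Γ → Γ → ℂ) (f : I → I → I → ℂ) (η : Γ → I → I → ℂ)
    (i : I) (m : ℤ) (y : ExtLoop Γ I) :
    brkt deg ω f η (e i m) y =
      Finsupp.linearCombination ℂ (fun q : I × ℤ => br0 deg ω f η i m q.1 q.2) y.1 := by
  unfold brkt e
  rw [Finsupp.sum_single_index, Finsupp.linearCombination_apply]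
  · simp [one_mul]
  · simp

set_option linter.unusedSectionVars false in
lemma brkt_e_right (deg : I → Γ) (ω : Γ → Γ → ℂ) (f : I → I → I → ℂ) (η : Γ → I → I → ℂ)
    (k : I) (l : ℤ) (y : ExtLoop Γ I) :
    brkt deg ω f η y (e k l) =
      Finsupp.linearCombination ℂ (fun p : I × ℤ => br0 deg ω f η p.1 p.2 k l) y.1 := by
  unfold brkt e
  rw [Finsupp.linearCombination_apply]
  refine Finsupp.sum_congr fun p _ => ?_
  rw [Finsupp.sum_single_index] <;> simp

set_option linter.unusedSectionVars false in
lemma brkt_ee (deg : I → Γ) (ω : Γ → Γ → ℂ) (f : I → I → I → ℂ) (η : Γ → I → I → ℂ)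
    (i : I) (m : ℤ) (k : I) (l : ℤ) :
    brkt deg ω f η (e i m) (e k l) = br0 deg ω f η i m k l := by
  rw [brkt_e_left]
  simp only [e]
  rw [Finsupp.linearCombination_single, one_smul]

set_option linter.unusedSectionVars false in
lemma lhs_eq (deg : I → Γ) (ω : Γ → Γ → ℂ) (f : I → I → I → ℂ) (η : Γ → I → I → ℂ)
    (i j k : I) (m n l : ℤ) :
    brkt deg ω f η (e i m) (brkt deg ω f η (e j n) (e k l)) =
      ∑ r, f j k r • br0 deg ω f η i m r (n + l) := by
  rw [brkt_ee, brkt_e_left, br0, map_sum]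
  refine Finset.sum_congr rfl fun r _ => ?_
  rw [map_smul, Finsupp.linearCombination_single, one_smul]

set_option linter.unusedSectionVars false in
lemma mid_eq (deg : I → Γ) (ω : Γ → Γ → ℂ) (f : I → I → I → ℂ) (η : Γ → I → I → ℂ)
    (i j k : I) (m n l : ℤ) :
    brkt deg ω f η (brkt deg ω f η (e i m) (e j n)) (e k l) =
      ∑ r, f i j r • br0 deg ω f η r (m + n) k l := by
  rw [brkt_ee, brkt_e_right, br0, map_sum]
  refine Finset.sum_congr rfl fun r _ => ?_
  rw [map_smul, Finsupp.linearCombination_single, one_smul]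

set_option linter.unusedSectionVars false in
lemma swap_sum {I : Type*} [Fintype I] (c : I → I → ℂ) (t : ℤ) :
    ∑ r : I, ∑ s : I, (c r s) • Finsupp.single (s, t) (1:ℂ)
      = ∑ s : I, (∑ r, c r s) • Finsupp.single (s, t) (1:ℂ) := by
  rw [Finset.sum_comm]
  exact Finset.sum_congr rfl fun s _ => (Finset.sum_smul).symm

theorem stmt18 (deg : I → Γ) (ω : Γ → Γ → ℂ) (f : I → I → I → ℂ) (η : Γ → I → I → ℂ)
    (hω1 : ∀ a b, ω a b * ω b a = 1)
    (hω2 : ∀ a b c, ω a (b + c) = ω a b * ω a c)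
    (hω3 : ∀ a b c, ω (a + b) c = ω a c * ω b c)
    (hf0 : ∀ i j k, deg i + deg j ≠ deg k → f i j k = 0)
    (hfskew : ∀ i j k, f i j k = -(ω (deg i) (deg j)) * f j i k)
    (hjac : ∀ i j r s, ∑ k, f j r k * f i k s =
      (∑ k, f i j k * f k r s) + ω (deg i) (deg j) * ∑ k, f i r k * f j k s)
    (hη0 : ∀ μ i j, deg i + deg j ≠ μ → η μ i j = 0)
    (hηsym : ∀ μ i j, η μ j i = ω μ μ * ω (deg i) (deg j) * η μ i j)
    (hinv : ∀ μ i j k, ∑ l, f i j l * η μ l k = ω μ (deg j) * ∑ l, f j k l * η μ i l) :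
    ∀ (i j k : I) (m n l : ℤ),
      brkt deg ω f η (e i m) (brkt deg ω f η (e j n) (e k l)) =
        brkt deg ω f η (brkt deg ω f η (e i m) (e j n)) (e k l) +
          ω (deg i) (deg j) • brkt deg ω f η (e j n) (brkt deg ω f η (e i m) (e k l)) := by
  intro i j k m n l
  rw [lhs_eq, mid_eq, lhs_eq, Finset.smul_sum]
  simp only [smul_smul]
  refine Prod.ext ?_ ?_
  · simp only [br0, Prod.fst_sum, Prod.smul_fst, Prod.fst_add, Finset.smul_sum, smul_smul]
    simp only [show m + (n + l) = m + n + l from by ring, show n + (m + l) = m + n + l from by ring]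
    rw [swap_sum, swap_sum, swap_sum, ← Finset.sum_add_distrib]
    refine Finset.sum_congr rfl fun s _ => ?_
    rw [← add_smul]
    congr 1
    rw [hjac i j k s, Finset.mul_sum]
    ring_nf
  · simp only [br0, Prod.snd_sum, Prod.smul_snd, Prod.snd_add]
    funext μ
    simp only [Finset.sum_apply, Pi.smul_apply, Pi.add_apply, smul_eq_mul]
    simp only [show m + (n + l) = m + n + l from by ring, show n + (m + l) = m + n + l from by ring]
    by_cases hz : m + n + l = 0
    · simp only [hz, if_pos rfl, mul_one]
      push_cast
      simp only [mul_one]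
      have hA : ∑ x : I, f j k x * ((m:ℂ) * ω (deg i) μ * η μ i x)
          = (m:ℂ) * ω (deg i) μ * ∑ x, f j k x * η μ i x := by
        rw [Finset.mul_sum]; exact Finset.sum_congr rfl fun r _ => by ring
      have hB : ∑ x : I, f i j x * (((m:ℂ) + n) * ω (deg x) μ * η μ x k)
          = ((m:ℂ) + n) * (ω (deg i) μ * ω (deg j) μ) * ∑ x, f i j x * η μ x k := by
        rw [Finset.mul_sum]
        refine Finset.sum_congr rfl fun r _ => ?_
        by_cases hd : deg i + deg j = deg r
        · rw [← hd, hω3]; ring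
        · rw [hf0 i j r hd]; ring
      have hC : ∑ x : I, ω (deg i) (deg j) * f i k x * ((n:ℂ) * ω (deg j) μ * η μ j x)
          = ω (deg i) (deg j) * ((n:ℂ) * ω (deg j) μ * ∑ x, f i k x * η μ j x) := by
        rw [Finset.mul_sum, Finset.mul_sum]
        exact Finset.sum_congr rfl fun r _ => by ring
      rw [hA, hB, hC]
      set A := ∑ x : I, f j k x * η μ i x with hAdef
      set B := ∑ x : I, f i j x * η μ x k with hBdef
      set C := ∑ x : I, f i k x * η μ j x with hCdef
      have h1 : B = ω μ (deg j) * A := hinv μ i j k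
      have h2 : ω μ (deg i) * C = -(ω (deg j) (deg i)) * B := by
        rw [← hinv μ j i k, hBdef, Finset.mul_sum]
        exact Finset.sum_congr rfl fun r _ => by rw [hfskew j i r]; ring
      have hA2 : A = ω (deg j) μ * B := by
        linear_combination -ω (deg j) μ * h1 - A * hω1 (deg j) μ
      have hC2 : C = -(ω (deg i) μ * ω (deg j) (deg i)) * B := by
        linear_combination ω (deg i) μ * h2 - C * hω1 (deg i) μ
      rw [hA2, hC2]
      linear_combination ((n:ℂ) * ω (deg i) μ * ω (deg j) μ * B) * hω1 (deg i) (deg j)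
    · simp [hz]

end
end
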